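/- arXiv:2602.17392 — 2 statements merged into one kernel-verified Lean document; each statement's English description precedes it below -/
import Mathlib

section
/- Tailored value-function cut, separation (second part of Lemma 1 of the paper): let (y′,z*) be a bilevel feasible pair, let Φ_tail be the tailored value-function bound built from (y′,z*), and let z′ ∈ 𝒮 satisfy π^F(y′,z′) < π^F(y′,z*) (i.e., (y′,z′) is integer feasible but bilevel infeasible). Then π^F(y′,z′) < Φ_tail(y′); that is, the pair (y′,z′) violates the tailored value-function cut. -/
/-!
Evaluated at the leader schedule `y'` it is built from, the tailored bound is exactly
`π^F(y', z*)`. Indeed, whenever `v_{ij}^{ℓt}(y', z*) ≠ 0`, the period `ℓ` is the last capture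
period of `j` before `t`, so `y'` opens no location considered by `j` strictly between `ℓ` and
`t`; the location `i` is `j`'s patron at `t`, so `y'` opens nothing `j` prefers to `i` at `t`;
and `v = 1 - ρ y'(i,t) = 1` with `ρ > 0` forces `y'(i,t) = 0`. Thus at `y'` the cut reads
`π^F(y', z') ≥ π^F(y', z*)`, which a bilevel-infeasible `z'` violates.
-/
open Finset

attribute [local instance] Classical.propDecidable

/-- Data of an instance of the competitive dynamic facility location problem under
cumulative customer demand (CDFLP-CCD).  `pref j a b` means that customer `j`
strictly prefers option `a` over option `b`, where `none` is the no-service option. -/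
structure CDFLP (I J : Type*) where
  /-- number of time periods; the period set is `{1, …, T}` -/
  T : ℕ
  /-- spawning demand of customer `j` at period `t` -/
  d : J → ℕ → ℝ
  /-- reward per unit of demand captured at location `i` -/
  r : I → ℝ
  /-- splitting factor -/
  ρ : ℝ
  /-- strict preference: `pref j a b` means `a ≻_j b` -/
  pref : J → Option I → Option I → Prop

namespace CDFLP

variable {I J : Type*} [Fintype I] [Fintype J]

/-- The model hypotheses: `T ≥ 1`, nonnegative demands and rewards, `ρ ∈ [0,1]`,
and every `≻_j` is a strict linear order on `I ∪ {0}`. -/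
def Valid (P : CDFLP I J) : Prop :=
  1 ≤ P.T ∧ (∀ j t, 0 ≤ P.d j t) ∧ (∀ i, 0 ≤ P.r i) ∧
    0 ≤ P.ρ ∧ P.ρ ≤ 1 ∧ ∀ j, IsStrictTotalOrder (Option I) (P.pref j)

/-- The locations considered by customer `j`, i.e. those preferred over no service. -/
noncomputable def considered (P : CDFLP I J) (j : J) : Finset I :=
  Finset.univ.filter fun i => P.pref j (some i) none

/-- `w` is a location schedule: on the planning horizon it is `{0,1}`-valued and opens
at most one facility per period. -/
def IsSched (P : CDFLP I J) (w : I → ℕ → ℝ) : Prop :=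
  ∀ t, 1 ≤ t → t ≤ P.T → (∀ i, w i t = 0 ∨ w i t = 1) ∧ (∑ i, w i t) ≤ 1

/-- `A_j^t(y,z)`: considered locations of `j` opened by the leader or the follower
at period `t`. -/
noncomputable def captureSet (P : CDFLP I J) (y z : I → ℕ → ℝ) (j : J) (t : ℕ) : Finset I :=
  Finset.univ.filter fun i => P.pref j (some i) none ∧ (y i t = 1 ∨ z i t = 1)

/-- `t ∈ 𝒯` is a capture period of customer `j`. -/
def IsCapture (P : CDFLP I J) (y z : I → ℕ → ℝ) (j : J) (t : ℕ) : Prop :=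
  1 ≤ t ∧ t ≤ P.T ∧ (P.captureSet y z j t).Nonempty

/-- `i` is the `≻_j`-greatest element of the capture set `A_j^t(y,z)`,
i.e. `i = i*(j,t)`. -/
def IsPatron (P : CDFLP I J) (y z : I → ℕ → ℝ) (j : J) (t : ℕ) (i : I) : Prop :=
  i ∈ P.captureSet y z j t ∧
    ∀ k ∈ P.captureSet y z j t, k ≠ i → P.pref j (some i) (some k)

/-- The greatest capture period of `j` smaller than `t` (`0` if there is none). -/
noncomputable def lastCap (P : CDFLP I J) (y z : I → ℕ → ℝ) (j : J) (t : ℕ) : ℕ :=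
  ((Finset.Ico 1 t).filter fun s => P.IsCapture y z j s).sup id

/-- `D_j^{ℓt}`: demand of customer `j` spawned in periods `ℓ+1, …, t`. -/
noncomputable def D (P : CDFLP I J) (j : J) (ℓ t : ℕ) : ℝ :=
  ∑ s ∈ Finset.Icc (ℓ + 1) t, P.d j s

/-- `v_{ij}^{ℓt}(y,z)`: fraction of `D_j^{ℓt}` captured by the follower through
location `i` at period `t`. -/
noncomputable def v (P : CDFLP I J) (y z : I → ℕ → ℝ) (j : J) (i : I) (ℓ t : ℕ) : ℝ :=
  if P.IsCapture y z j t ∧ ℓ = P.lastCap y z j t ∧ P.IsPatron y z j t i ∧ z i t = 1 then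
    1 - P.ρ * y i t
  else 0

/-- `u_{ij}^{ℓt}(y,z)`: fraction of `D_j^{ℓt}` captured by the leader through
location `i` at period `t`. -/
noncomputable def u (P : CDFLP I J) (y z : I → ℕ → ℝ) (j : J) (i : I) (ℓ t : ℕ) : ℝ :=
  if P.IsCapture y z j t ∧ ℓ = P.lastCap y z j t ∧ P.IsPatron y z j t i ∧ y i t = 1 then
    1 - (1 - P.ρ) * z i t
  else 0

/-- The follower's profit `π^F(y,z)`. -/
noncomputable def profitF (P : CDFLP I J) (y z : I → ℕ → ℝ) : ℝ :=
  ∑ t ∈ Finset.Icc 1 P.T, ∑ ℓ ∈ Finset.range t, ∑ j : J, ∑ i ∈ P.considered j,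
    P.r i * P.D j ℓ t * P.v y z j i ℓ t

/-- The leader's profit `π^L(y,z)`. -/
noncomputable def profitL (P : CDFLP I J) (y z : I → ℕ → ℝ) : ℝ :=
  ∑ t ∈ Finset.Icc 1 P.T, ∑ ℓ ∈ Finset.range t, ∑ j : J, ∑ i ∈ P.considered j,
    P.r i * P.D j ℓ t * P.u y z j i ℓ t

/-- `(y,z)` is bilevel feasible: both are schedules and `z` is an optimal
reaction of the follower against `y`. -/
def BilevelFeasible (P : CDFLP I J) (y z : I → ℕ → ℝ) : Prop :=
  P.IsSched y ∧ P.IsSched z ∧ ∀ z', P.IsSched z' → P.profitF y z' ≤ P.profitF y z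


/-- The tailored value-function bound built from the pair `(y', zs)`, evaluated at a
leader schedule `y`. -/
noncomputable def tailoredBound (P : CDFLP I J) (y' zs y : I → ℕ → ℝ) : ℝ :=
  ∑ t ∈ Finset.Icc 1 P.T, ∑ ℓ ∈ Finset.range t, ∑ j : J, ∑ i ∈ P.considered j,
    P.r i * P.D j ℓ t * P.v y' zs j i ℓ t *
      (1 - (∑ k ∈ P.considered j, ∑ s ∈ Finset.Ioo ℓ t, y k s)
         - (∑ k ∈ Finset.univ.filter fun k => P.pref j (some k) (some i), y k t)
         - (if P.v y' zs j i ℓ t = 1 ∧ 0 < P.ρ then 1 else 0) * y i t)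

end CDFLP

namespace CDFLP

variable {I J : Type*} [Fintype I]

section TailoredBound

variable {P : CDFLP I J} {y z : I → ℕ → ℝ} {j : J}

theorem IsSched.eq_zero_of_ne_one {w : I → ℕ → ℝ} (hw : P.IsSched w) {i : I} {t : ℕ}
    (ht₁ : 1 ≤ t) (ht₂ : t ≤ P.T) (h : w i t ≠ 1) : w i t = 0 :=
  ((hw t ht₁ ht₂).1 i).resolve_right h

theorem le_lastCap {s t : ℕ} (hs : P.IsCapture y z j s) (hst : s < t) :
    s ≤ P.lastCap y z j t :=
  Finset.le_sup (f := id) (Finset.mem_filter.2 ⟨Finset.mem_Ico.2 ⟨hs.1, hst⟩, hs⟩)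

theorem mem_captureSet_of_leader {i : I} {t : ℕ} (hi : i ∈ P.considered j) (hy : y i t = 1) :
    i ∈ P.captureSet y z j t := by
  simp only [captureSet, considered, Finset.mem_filter, Finset.mem_univ, true_and] at hi ⊢
  exact ⟨hi, Or.inl hy⟩

theorem eq_zero_of_lastCap_lt (hy : P.IsSched y) {k : I} (hk : k ∈ P.considered j)
    {s t : ℕ} (hs : P.lastCap y z j t < s) (hst : s < t) (ht : t ≤ P.T) : y k s = 0 := by
  have hs₁ : 1 ≤ s := by omega
  refine hy.eq_zero_of_ne_one hs₁ (by omega) fun hks => ?_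
  have hcap : P.IsCapture y z j s := ⟨hs₁, by omega, k, mem_captureSet_of_leader hk hks⟩
  exact absurd (le_lastCap hcap hst) (not_le.2 hs)

theorem not_mem_captureSet_of_pref_patron (hord : IsStrictOrder (Option I) (P.pref j))
    {i k : I} {t : ℕ} (hpat : P.IsPatron y z j t i) (hki : P.pref j (some k) (some i)) :
    k ∉ P.captureSet y z j t := fun hk =>
  have hne : k ≠ i := by rintro rfl; exact irrefl_of (P.pref j) _ hki
  irrefl_of (P.pref j) _ (trans_of (P.pref j) (hpat.2 k hk hne) hki)

theorem eq_zero_of_pref_patron (hord : IsStrictOrder (Option I) (P.pref j))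
    (hy : P.IsSched y) {i k : I} {t : ℕ} (ht₁ : 1 ≤ t) (ht₂ : t ≤ P.T)
    (hi : i ∈ P.considered j) (hpat : P.IsPatron y z j t i)
    (hki : P.pref j (some k) (some i)) : y k t = 0 := by
  refine hy.eq_zero_of_ne_one ht₁ ht₂ fun hkt =>
    not_mem_captureSet_of_pref_patron hord hpat hki (mem_captureSet_of_leader ?_ hkt)
  simp only [considered, Finset.mem_filter, Finset.mem_univ, true_and] at hi ⊢
  exact trans_of (P.pref j) hki hi

theorem tailoredFactor_eq_one [Fintype J] (hord : IsStrictOrder (Option I) (P.pref j))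
    (hy : P.IsSched y) {i : I} {ℓ t : ℕ} (ht₁ : 1 ≤ t) (ht₂ : t ≤ P.T)
    (hi : i ∈ P.considered j) (hv : P.v y z j i ℓ t ≠ 0) :
    1 - (∑ k ∈ P.considered j, ∑ s ∈ Finset.Ioo ℓ t, y k s)
      - (∑ k ∈ Finset.univ.filter fun k => P.pref j (some k) (some i), y k t)
      - (if P.v y z j i ℓ t = 1 ∧ 0 < P.ρ then 1 else 0) * y i t = 1 := by
  have hcond : P.IsCapture y z j t ∧ ℓ = P.lastCap y z j t ∧
      P.IsPatron y z j t i ∧ z i t = 1 := by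
    by_contra h
    exact hv (if_neg h)
  have hvval : P.v y z j i ℓ t = 1 - P.ρ * y i t := if_pos hcond
  obtain ⟨-, rfl, hpat, -⟩ := hcond
  have hbetween : ∑ k ∈ P.considered j, ∑ s ∈ Finset.Ioo (P.lastCap y z j t) t, y k s = 0 :=
    Finset.sum_eq_zero fun k hk => Finset.sum_eq_zero fun s hs =>
      eq_zero_of_lastCap_lt hy hk (Finset.mem_Ioo.1 hs).1 (Finset.mem_Ioo.1 hs).2 ht₂
  have hpreferred : ∑ k ∈ Finset.univ.filter fun k => P.pref j (some k) (some i), y k t = 0 :=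
    Finset.sum_eq_zero fun k hk =>
      eq_zero_of_pref_patron hord hy ht₁ ht₂ hi hpat (Finset.mem_filter.1 hk).2
  have hsplit : (if P.v y z j i (P.lastCap y z j t) t = 1 ∧ 0 < P.ρ then (1 : ℝ) else 0)
      * y i t = 0 := by
    split_ifs with h
    · have hρy : P.ρ * y i t = 0 := by linarith [h.1]
      simp [(mul_eq_zero.1 hρy).resolve_left h.2.ne']
    · exact zero_mul _
  rw [hbetween, hpreferred, hsplit]
  ring

theorem tailoredBound_self [Fintype J] (hord : ∀ j, IsStrictOrder (Option I) (P.pref j))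
    (hy : P.IsSched y) : P.tailoredBound y z y = P.profitF y z := by
  refine Finset.sum_congr rfl fun t ht => Finset.sum_congr rfl fun ℓ _ =>
    Finset.sum_congr rfl fun j _ => Finset.sum_congr rfl fun i hi => ?_
  obtain ⟨ht₁, ht₂⟩ := Finset.mem_Icc.1 ht
  by_cases hv : P.v y z j i ℓ t = 0
  · rw [hv, mul_zero, zero_mul]
  · rw [tailoredFactor_eq_one (hord j) hy ht₁ ht₂ hi hv, mul_one]

end TailoredBound

variable [Fintype J]

theorem tailored_cut_separation_general (P : CDFLP I J) (hP : P.Valid)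
    (y' zs : I → ℕ → ℝ) (hfeas : P.BilevelFeasible y' zs)
    (z' : I → ℕ → ℝ)
    (hinf : P.profitF y' z' < P.profitF y' zs) :
    P.profitF y' z' < P.tailoredBound y' zs y' := by
  have hord : ∀ j, IsStrictOrder (Option I) (P.pref j) := fun j =>
    have := hP.2.2.2.2.2 j
    inferInstance
  rwa [tailoredBound_self hord hfeas.1]

/-- **Lemma 1, separation.**  The tailored value-function cut built from a bilevel
feasible pair `(y', zs)` is violated by every integer-feasible but bilevel-infeasible
pair `(y', z')`. -/
theorem tailored_cut_separation (P : CDFLP I J) (hP : P.Valid)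
    (y' zs : I → ℕ → ℝ) (hfeas : P.BilevelFeasible y' zs)
    (z' : I → ℕ → ℝ) (hz' : P.IsSched z')
    (hinf : P.profitF y' z' < P.profitF y' zs) :
    P.profitF y' z' < P.tailoredBound y' zs y' :=
  tailored_cut_separation_general P hP y' zs hfeas z' hinf

end CDFLP
end

section
/- Dominance of the tightened cut (Theorem 2 of the paper): let (y′,z*) be a bilevel feasible pair, let Φ_tail be the tailored value-function bound built from (y′,z*), and let Φ_tight be the tightened value-function bound of z*. Then Φ_tight(y) ≥ Φ_tail(y) for every location schedule y ∈ 𝒮; that is, the tightened value-function cut dominates the tailored value-function cut for the follower problem. -/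
open Finset

attribute [local instance] Classical.propDecidable

namespace CDFLP

variable {I J : Type*} [Fintype I] [Fintype J]

/-- `o_{ij}^{st}(y)`: the maximum of the `y`-values at locations/periods through which
the leader can intercept the demand portion spawned at period `s` and captured at
period `t` through location `i`; the maximum of an empty set is taken as `0`. -/
noncomputable def oMax (P : CDFLP I J) (y : I → ℕ → ℝ) (j : J) (i : I) (s t : ℕ) : ℝ :=
  max ((Finset.Ico s t ×ˢ P.considered j).fold max 0 fun p => y p.2 p.1)
      ((Finset.univ.filter fun k => P.pref j (some k) (some i)).fold max 0 fun k => y k t)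

/-- The tightened value-function bound of the follower schedule `zs`, evaluated at a
leader schedule `y` (the `v`-values are taken against the empty leader schedule). -/
noncomputable def tightenedBound (P : CDFLP I J) (zs y : I → ℕ → ℝ) : ℝ :=
  ∑ t ∈ Finset.Icc 1 P.T, ∑ ℓ ∈ Finset.range t, ∑ j : J, ∑ i ∈ P.considered j,
    P.r i * P.v (fun _ _ => 0) zs j i ℓ t *
      (P.D j ℓ t - (∑ s ∈ Finset.Icc (ℓ + 1) t, P.d j s * P.oMax y j i s t)
        - P.ρ * y i t * ∑ s ∈ Finset.Icc (ℓ + 1) t, P.d j s * (1 - P.oMax y j i s t))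

end CDFLP

/-!
Fix `t`, `j`, `i`. Only the term `ℓ = lastCap (y', z*)` of the tailored cut survives, and it
vanishes unless `z*` opens `i` at `t` and `i` is `j`'s favourite there. In that case `i` is
also the favourite against the empty leader, whose last capture period `ℓ₀` comes no later,
so the matching tightened term is a demand sum over the longer window `(ℓ₀, t]`. Termwise,
`(1 - ρ y'ᵢₜ)(1 - Σ y - c yᵢₜ) ≤ (1 - o)(1 - ρ yᵢₜ)` with `c = [y'ᵢₜ = 0 ∧ ρ > 0]`, because
`o`, a maximum of `0/1` values, is at most their sum `Σ y`.
-/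

lemma fold_max_zero_le_sum {α : Type*} {s : Finset α} {f : α → ℝ} (hf : ∀ x ∈ s, 0 ≤ f x) :
    s.fold max 0 f ≤ ∑ x ∈ s, f x :=
  (fold_max_le _).2 ⟨sum_nonneg hf, fun _ hx => single_le_sum hf hx⟩

lemma tailored_factor_le_tightened_factor {ρ y y' o A B : ℝ} (hρ0 : 0 ≤ ρ) (hρ1 : ρ ≤ 1)
    (hy0 : 0 ≤ y) (hy1 : y ≤ 1) (ho0 : 0 ≤ o) (ho1 : o ≤ 1) (hoAB : o ≤ A + B)
    (hy' : y' = 0 ∨ y' = 1) :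
    (1 - ρ * y') * (1 - A - B - (if 1 - ρ * y' = 1 ∧ 0 < ρ then 1 else 0) * y)
      ≤ (1 - o) * (1 - ρ * y) := by
  rcases hy' with rfl | rfl
  · rcases hρ0.lt_or_eq with hρ | rfl
    · simp only [mul_zero, sub_zero, true_and, hρ, if_true]
      nlinarith [mul_nonneg (mul_nonneg hρ0 hy0) ho0, mul_nonneg hy0 (sub_nonneg.2 hρ1)]
    · rw [if_neg fun h => lt_irrefl _ h.2]
      linarith
  · have hc : ¬(1 - ρ * 1 = 1 ∧ 0 < ρ) := fun ⟨h, hρ⟩ => by linarith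
    rw [if_neg hc, zero_mul, sub_zero, mul_one]
    nlinarith [mul_nonneg (mul_nonneg (sub_nonneg.2 ho1) hρ0) (sub_nonneg.2 hy1),
      mul_nonneg (sub_nonneg.2 hρ1) (sub_nonneg.2 hoAB)]

namespace CDFLP

variable {I J : Type*} [Fintype I]

lemma IsSched.nonneg {P : CDFLP I J} {w : I → ℕ → ℝ} (hw : P.IsSched w) (i : I) {t : ℕ}
    (h1 : 1 ≤ t) (hT : t ≤ P.T) : 0 ≤ w i t := by
  rcases (hw t h1 hT).1 i with h | h <;> simp [h]

lemma IsSched.le_one {P : CDFLP I J} {w : I → ℕ → ℝ} (hw : P.IsSched w) (i : I) {t : ℕ}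
    (h1 : 1 ≤ t) (hT : t ≤ P.T) : w i t ≤ 1 := by
  rcases (hw t h1 hT).1 i with h | h <;> simp [h]

lemma lastCap_lt (P : CDFLP I J) (y z : I → ℕ → ℝ) (j : J) {t : ℕ} (ht : 1 ≤ t) :
    P.lastCap y z j t < t := by
  rw [lastCap, Finset.sup_lt_iff (show (⊥ : ℕ) < t from ht)]
  exact fun s hs => (mem_Ico.1 (mem_filter.1 hs).1).2

lemma captureSet_empty_subset (P : CDFLP I J) (y z : I → ℕ → ℝ) (j : J) (t : ℕ) :
    P.captureSet (fun _ _ => 0) z j t ⊆ P.captureSet y z j t := by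
  intro k hk
  simp only [captureSet, mem_filter, mem_univ, true_and] at hk ⊢
  exact ⟨hk.1, Or.inr (hk.2.resolve_left zero_ne_one)⟩

lemma lastCap_empty_le (P : CDFLP I J) (y z : I → ℕ → ℝ) (j : J) (t : ℕ) :
    P.lastCap (fun _ _ => 0) z j t ≤ P.lastCap y z j t :=
  sup_mono <| monotone_filter_right _ fun _ _ ⟨h1, hT, hA⟩ =>
    ⟨h1, hT, hA.mono (P.captureSet_empty_subset y z j _)⟩

section FollowerShare

variable {P : CDFLP I J} {y z : I → ℕ → ℝ} {j : J} {i : I} {ℓ t : ℕ}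

lemma v_eq_zero_of_ne_lastCap (h : ℓ ≠ P.lastCap y z j t) : P.v y z j i ℓ t = 0 :=
  if_neg fun hc => h hc.2.1

lemma v_empty_nonneg : 0 ≤ P.v (fun _ _ => 0) z j i ℓ t := by
  unfold v; split_ifs <;> simp

lemma v_conditions_of_ne_zero (h : P.v y z j i ℓ t ≠ 0) :
    P.IsCapture y z j t ∧ ℓ = P.lastCap y z j t ∧ P.IsPatron y z j t i ∧ z i t = 1 := by
  by_contra hc
  exact h (if_neg hc)

lemma v_eq_of_ne_zero (h : P.v y z j i ℓ t ≠ 0) : P.v y z j i ℓ t = 1 - P.ρ * y i t :=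
  if_pos (v_conditions_of_ne_zero h)

lemma v_empty_lastCap_eq_one (h : P.v y z j i ℓ t ≠ 0) :
    P.v (fun _ _ => 0) z j i (P.lastCap (fun _ _ => 0) z j t) t = 1 := by
  obtain ⟨⟨ht1, htT, -⟩, -, ⟨hiA, hbest⟩, hzi⟩ := v_conditions_of_ne_zero h
  have hiA₀ : i ∈ P.captureSet (fun _ _ => 0) z j t := by
    simp only [captureSet, mem_filter, mem_univ, true_and] at hiA ⊢
    exact ⟨hiA.1, Or.inr hzi⟩
  have hpatron : P.IsPatron (fun _ _ => 0) z j t i :=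
    ⟨hiA₀, fun k hk => hbest k (P.captureSet_empty_subset y z j t hk)⟩
  rw [v, if_pos ⟨⟨ht1, htT, i, hiA₀⟩, rfl, hpatron, hzi⟩, mul_zero, sub_zero]

end FollowerShare

section Interception

variable {P : CDFLP I J} {y : I → ℕ → ℝ} {j : J} {i : I} {ℓ s t : ℕ}

lemma oMax_nonneg : 0 ≤ P.oMax y j i s t :=
  le_max_of_le_left ((le_fold_max _).2 (Or.inl le_rfl))

lemma oMax_le_one (hy : P.IsSched y) (hs : 1 ≤ s) (hst : s ≤ t) (htT : t ≤ P.T) :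
    P.oMax y j i s t ≤ 1 := by
  refine max_le ((fold_max_le _).2 ⟨zero_le_one, fun p hp => ?_⟩)
    ((fold_max_le _).2 ⟨zero_le_one, fun k _ => hy.le_one k (hs.trans hst) htT⟩)
  obtain ⟨hp1, hp2⟩ := mem_Ico.1 (mem_product.1 hp).1
  exact hy.le_one _ (hs.trans hp1) (hp2.le.trans htT)

lemma oMax_le_sum (hy : P.IsSched y) (hℓs : ℓ < s) (hst : s ≤ t) (htT : t ≤ P.T) :
    P.oMax y j i s t ≤ (∑ k ∈ P.considered j, ∑ s' ∈ Ioo ℓ t, y k s')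
      + ∑ k ∈ univ.filter fun k => P.pref j (some k) (some i), y k t := by
  have hwindow : ∀ p ∈ Ioo ℓ t ×ˢ P.considered j, 0 ≤ y p.2 p.1 := fun p hp => by
    obtain ⟨hp1, hp2⟩ := mem_Ioo.1 (mem_product.1 hp).1
    exact hy.nonneg _ (by omega) (hp2.le.trans htT)
  have hpreferred : ∀ k ∈ univ.filter fun k => P.pref j (some k) (some i), 0 ≤ y k t :=
    fun k _ => hy.nonneg k (by omega) htT
  have hsub : Ico s t ×ˢ P.considered j ⊆ Ioo ℓ t ×ˢ P.considered j :=
    product_subset_product_left fun s' hs' => by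
      rw [mem_Ico] at hs'; rw [mem_Ioo]; omega
  refine max_le ?_ ((fold_max_zero_le_sum hpreferred).trans
    (le_add_of_nonneg_left (sum_nonneg fun k hk => sum_nonneg fun s' hs' => hwindow (s', k)
      (mem_product.2 ⟨hs', hk⟩))))
  calc _ ≤ ∑ p ∈ Ico s t ×ˢ P.considered j, y p.2 p.1 :=
        fold_max_zero_le_sum fun p hp => hwindow p (hsub hp)
    _ ≤ ∑ p ∈ Ioo ℓ t ×ˢ P.considered j, y p.2 p.1 :=
        sum_le_sum_of_subset_of_nonneg hsub fun p hp _ => hwindow p hp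
    _ = ∑ k ∈ P.considered j, ∑ s' ∈ Ioo ℓ t, y k s' := sum_product_right _ _ _
    _ ≤ _ := le_add_of_nonneg_right (sum_nonneg hpreferred)

end Interception

section Terms

variable {P : CDFLP I J} {y' zs y : I → ℕ → ℝ} {j : J} {i : I} {ℓ t : ℕ}

variable (P) in
noncomputable def tailoredTerm (y' zs y : I → ℕ → ℝ) (j : J) (i : I) (ℓ t : ℕ) : ℝ :=
  P.r i * P.D j ℓ t * P.v y' zs j i ℓ t *
    (1 - (∑ k ∈ P.considered j, ∑ s ∈ Ioo ℓ t, y k s)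
       - (∑ k ∈ univ.filter fun k => P.pref j (some k) (some i), y k t)
       - (if P.v y' zs j i ℓ t = 1 ∧ 0 < P.ρ then 1 else 0) * y i t)

variable (P) in
noncomputable def tightenedTerm (zs y : I → ℕ → ℝ) (j : J) (i : I) (ℓ t : ℕ) : ℝ :=
  P.r i * P.v (fun _ _ => 0) zs j i ℓ t *
    (P.D j ℓ t - (∑ s ∈ Icc (ℓ + 1) t, P.d j s * P.oMax y j i s t)
      - P.ρ * y i t * ∑ s ∈ Icc (ℓ + 1) t, P.d j s * (1 - P.oMax y j i s t))

lemma tailoredTerm_eq_zero_of_ne_lastCap (h : ℓ ≠ P.lastCap y' zs j t) :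
    P.tailoredTerm y' zs y j i ℓ t = 0 := by
  rw [tailoredTerm, v_eq_zero_of_ne_lastCap h, mul_zero, zero_mul]

lemma tightenedTerm_eq_sum :
    P.tightenedTerm zs y j i ℓ t = P.r i * P.v (fun _ _ => 0) zs j i ℓ t *
      ∑ s ∈ Icc (ℓ + 1) t, P.d j s * ((1 - P.oMax y j i s t) * (1 - P.ρ * y i t)) := by
  rw [tightenedTerm, D, mul_sum, ← sum_sub_distrib, ← sum_sub_distrib]
  exact congrArg _ (sum_congr rfl fun s _ => by ring)

lemma tightened_weight_nonneg (hρ0 : 0 ≤ P.ρ) (hρ1 : P.ρ ≤ 1) (hy : P.IsSched y)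
    (htT : t ≤ P.T) {s : ℕ} (hs : s ∈ Icc (ℓ + 1) t) :
    0 ≤ (1 - P.oMax y j i s t) * (1 - P.ρ * y i t) := by
  obtain ⟨hs1, hst⟩ := mem_Icc.1 hs
  have hyit : y i t ≤ 1 := hy.le_one i (by omega) htT
  have hρy : P.ρ * y i t ≤ 1 := by nlinarith [hy.nonneg i (by omega) htT]
  exact mul_nonneg (sub_nonneg.2 (oMax_le_one hy (by omega) hst htT)) (sub_nonneg.2 hρy)

lemma tightenedTerm_nonneg (hd : ∀ j t, 0 ≤ P.d j t) (hr : ∀ i, 0 ≤ P.r i)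
    (hρ0 : 0 ≤ P.ρ) (hρ1 : P.ρ ≤ 1) (hy : P.IsSched y) (htT : t ≤ P.T) :
    0 ≤ P.tightenedTerm zs y j i ℓ t := by
  rw [tightenedTerm_eq_sum]
  exact mul_nonneg (mul_nonneg (hr i) v_empty_nonneg) <| sum_nonneg fun s hs =>
    mul_nonneg (hd j s) (tightened_weight_nonneg hρ0 hρ1 hy htT hs)

lemma tailoredTerm_le_tightenedTerm (hd : ∀ j t, 0 ≤ P.d j t) (hr : ∀ i, 0 ≤ P.r i)
    (hρ0 : 0 ≤ P.ρ) (hρ1 : P.ρ ≤ 1) (hy' : P.IsSched y') (hy : P.IsSched y)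
    (htT : t ≤ P.T) :
    P.tailoredTerm y' zs y j i (P.lastCap y' zs j t) t
      ≤ P.tightenedTerm zs y j i (P.lastCap (fun _ _ => 0) zs j t) t := by
  set ℓs := P.lastCap y' zs j t
  set ℓ₀ := P.lastCap (fun _ _ => 0) zs j t
  by_cases hv : P.v y' zs j i ℓs t = 0
  · rw [tailoredTerm, hv, mul_zero, zero_mul]
    exact tightenedTerm_nonneg hd hr hρ0 hρ1 hy htT
  have ht1 : 1 ≤ t := (v_conditions_of_ne_zero hv).1.1
  set F := 1 - (∑ k ∈ P.considered j, ∑ s ∈ Ioo ℓs t, y k s)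
    - (∑ k ∈ univ.filter fun k => P.pref j (some k) (some i), y k t)
    - (if 1 - P.ρ * y' i t = 1 ∧ 0 < P.ρ then 1 else 0) * y i t with hF
  have hfactor : ∀ s ∈ Icc (ℓs + 1) t,
      (1 - P.ρ * y' i t) * F ≤ (1 - P.oMax y j i s t) * (1 - P.ρ * y i t) := fun s hs => by
    obtain ⟨hs1, hst⟩ := mem_Icc.1 hs
    exact tailored_factor_le_tightened_factor hρ0 hρ1 (hy.nonneg i ht1 htT)
      (hy.le_one i ht1 htT) oMax_nonneg (oMax_le_one hy (by omega) hst htT)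
      (oMax_le_sum hy (by omega) hst htT) ((hy' t ht1 htT).1 i)
  have hweight : ∀ s ∈ Icc (ℓ₀ + 1) t,
      0 ≤ P.d j s * ((1 - P.oMax y j i s t) * (1 - P.ρ * y i t)) := fun s hs =>
    mul_nonneg (hd j s) (tightened_weight_nonneg hρ0 hρ1 hy htT hs)
  calc P.tailoredTerm y' zs y j i ℓs t
      = P.r i * ∑ s ∈ Icc (ℓs + 1) t, P.d j s * ((1 - P.ρ * y' i t) * F) := by
        rw [tailoredTerm, v_eq_of_ne_zero hv, ← hF, D, mul_assoc, mul_assoc, sum_mul]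
    _ ≤ P.r i * ∑ s ∈ Icc (ℓs + 1) t,
          P.d j s * ((1 - P.oMax y j i s t) * (1 - P.ρ * y i t)) :=
        mul_le_mul_of_nonneg_left
          (sum_le_sum fun s hs => mul_le_mul_of_nonneg_left (hfactor s hs) (hd j s)) (hr i)
    _ ≤ P.r i * ∑ s ∈ Icc (ℓ₀ + 1) t,
          P.d j s * ((1 - P.oMax y j i s t) * (1 - P.ρ * y i t)) :=
        mul_le_mul_of_nonneg_left (sum_le_sum_of_subset_of_nonneg
          (Icc_subset_Icc_left (by simpa using P.lastCap_empty_le y' zs j t))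
          fun s hs _ => hweight s hs) (hr i)
    _ = P.tightenedTerm zs y j i ℓ₀ t := by
        rw [tightenedTerm_eq_sum, v_empty_lastCap_eq_one hv, mul_one]

lemma sum_tailoredTerm_le (hd : ∀ j t, 0 ≤ P.d j t) (hr : ∀ i, 0 ≤ P.r i)
    (hρ0 : 0 ≤ P.ρ) (hρ1 : P.ρ ≤ 1) (hy' : P.IsSched y') (hy : P.IsSched y)
    (ht1 : 1 ≤ t) (htT : t ≤ P.T) :
    ∑ ℓ ∈ range t, P.tailoredTerm y' zs y j i ℓ t
      ≤ ∑ ℓ ∈ range t, P.tightenedTerm zs y j i ℓ t := by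
  rw [sum_eq_single_of_mem _ (mem_range.2 (P.lastCap_lt y' zs j ht1))
    fun ℓ _ hℓ => tailoredTerm_eq_zero_of_ne_lastCap hℓ]
  exact (tailoredTerm_le_tightenedTerm hd hr hρ0 hρ1 hy' hy htT).trans <|
    single_le_sum (f := fun ℓ => P.tightenedTerm zs y j i ℓ t)
      (fun ℓ _ => tightenedTerm_nonneg hd hr hρ0 hρ1 hy htT)
      (mem_range.2 (P.lastCap_lt _ zs j ht1))

end Terms

variable [Fintype J]

/-- **Theorem 2.**  The tightened value-function cut dominates the tailored
value-function cut: for every leader schedule `y`, the tightened bound is at least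
the tailored bound. -/
theorem tightened_dominates_tailored (P : CDFLP I J) (hP : P.Valid)
    (y' zs : I → ℕ → ℝ) (hfeas : P.BilevelFeasible y' zs)
    (y : I → ℕ → ℝ) (hy : P.IsSched y) :
    P.tailoredBound y' zs y ≤ P.tightenedBound zs y := by
  obtain ⟨-, hd, hr, hρ0, hρ1, -⟩ := hP
  refine sum_le_sum fun t ht => ?_
  obtain ⟨ht1, htT⟩ := mem_Icc.1 ht
  show ∑ ℓ ∈ range t, ∑ j, ∑ i ∈ P.considered j, P.tailoredTerm y' zs y j i ℓ t
    ≤ ∑ ℓ ∈ range t, ∑ j, ∑ i ∈ P.considered j, P.tightenedTerm zs y j i ℓ t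
  simp only [sum_comm (s := range t)]
  exact sum_le_sum fun j _ => sum_le_sum fun i _ =>
    sum_tailoredTerm_le hd hr hρ0 hρ1 hfeas.1 hy ht1 htT

end CDFLP
end
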